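/- Let I ⊆ R = MvPolynomial (Fin N) ℂ be an M-graded ideal, let J = Ideal.span {g_1, …, g_t} where each g_i is M-homogeneous, assume the grading is pointed, and let m ∈ M. Then D_0^m(I : J) = ∑_{i=1}^t D_0^m(I : g_i); explicitly, an M-homogeneous polynomial q of degree m satisfies λ_q(f) = 0 for all f ∈ I : J if and only if q = q_1 + ⋯ + q_t where each q_i is M-homogeneous of degree m and λ_{q_i} vanishes on the ideal quotient I : ⟨g_i⟩. -/

import Mathlib

open MvPolynomial

/-- The Macaulay pairing `λ_p(f) = ∑_α coeff(α,p) * coeff(α,f)`, as a linear functional. -/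
noncomputable def lam {N : ℕ} (p : MvPolynomial (Fin N) ℂ) :
    MvPolynomial (Fin N) ℂ →ₗ[ℂ] ℂ where
  toFun f := ∑ α ∈ p.support, coeff α p * coeff α f
  map_add' f g := by simp [mul_add, Finset.sum_add_distrib]
  map_smul' c f := by
    simp [MvPolynomial.coeff_smul, Finset.mul_sum, mul_left_comm]

/-- An ideal is `M`-graded if it is generated by a set of `M`-homogeneous polynomials. -/
def IsMGraded {N : ℕ} {M : Type*} [AddCommGroup M] (w : Fin N → M)
    (I : Ideal (MvPolynomial (Fin N) ℂ)) : Prop :=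
  ∃ S : Set (MvPolynomial (Fin N) ℂ),
    (∀ s ∈ S, ∃ m : M, s.IsWeightedHomogeneous w m) ∧ I = Ideal.span S

/-!
Restricted to polynomials of degree `m`, which form a finite-dimensional space because the
grading is pointed, `(p, f) ↦ λ_p(f)` is a perfect pairing: it is the standard dot product in
the monomial basis. Since `I` and the `gᵢ` are homogeneous, each `I : ⟨gᵢ⟩` is graded, so for
`q` of degree `m` the functional `λ_q` vanishes on `I : ⟨gᵢ⟩` iff it vanishes on its degree-`m`
part `Wᵢ`. As `I : J = ⋂ᵢ (I : ⟨gᵢ⟩)`, the theorem becomes the finite-dimensional duality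
`(⋂ᵢ Wᵢ)^⊥ = ∑ᵢ Wᵢ^⊥`.
-/
theorem Submodule.comap_dualAnnihilator_iInf {K V ι : Type*} [Field K] [AddCommGroup V]
    [Module K V] [FiniteDimensional K V] [Finite ι] {Φ : V →ₗ[K] Module.Dual K V}
    (hΦ : Function.Injective Φ) (W : ι → Submodule K V) :
    (⨅ i, W i).dualAnnihilator.comap Φ = ⨆ i, (W i).dualAnnihilator.comap Φ := by
  let e := Φ.linearEquivOfInjective hΦ Subspace.dual_finrank_eq.symm
  change (⨅ i, W i).dualAnnihilator.comap (e : V →ₗ[K] Module.Dual K V) =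
    ⨆ i, (W i).dualAnnihilator.comap (e : V →ₗ[K] Module.Dual K V)
  simp only [Subspace.dualAnnihilator_iInf_eq, Submodule.comap_equiv_eq_map_symm,
    Submodule.map_iSup]

theorem Submodule.mem_iSup_iff_exists_sum {R N ι : Type*} [Semiring R] [AddCommMonoid N]
    [Module R N] [Fintype ι] (p : ι → Submodule R N) (x : N) :
    x ∈ ⨆ i, p i ↔ ∃ μ : ι → N, x = ∑ i, μ i ∧ ∀ i, μ i ∈ p i := by
  rw [show ⨆ i, p i = ⨆ i ∈ Finset.univ, p i by simp,
    Submodule.mem_iSup_finset_iff_exists_sum]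
  constructor
  · rintro ⟨μ, rfl⟩
    exact ⟨fun i => μ i, rfl, fun i => (μ i).2⟩
  · rintro ⟨μ, rfl, hμ⟩
    exact ⟨fun i => ⟨μ i, hμ i⟩, rfl⟩

namespace MvPolynomial

attribute [local instance] weightedGradedAlgebra

theorem weightedHomogeneousComponent_mul_of_isWeightedHomogeneous {σ R M : Type*}
    [CommSemiring R] [AddCancelCommMonoid M] {w : σ → M} {g : MvPolynomial σ R} {d : M}
    (hg : g.IsWeightedHomogeneous w d) (f : MvPolynomial σ R) (n : M) :
    weightedHomogeneousComponent w (n + d) (f * g) = weightedHomogeneousComponent w n f * g := by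
  classical
  simp only [← weightedDecomposition.decompose'_apply]
  exact DirectSum.coe_decompose_mul_add_of_right_mem (weightedHomogeneousSubmodule R w) hg

theorem finiteDimensional_weightedHomogeneousSubmodule {σ K M : Type*} [Field K]
    [AddCommMonoid M] {w : σ → M} {m : M}
    (hfin : {α : σ →₀ ℕ | Finsupp.weight w α = m}.Finite) :
    FiniteDimensional K (weightedHomogeneousSubmodule K w m) := by
  have := hfin.to_subtype
  rw [weightedHomogeneousSubmodule_eq_finsupp_supported]
  exact Module.Finite.equiv (AddMonoidAlgebra.supportedEquivFinsupp _).symm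

end MvPolynomial

section Graded

variable {N : ℕ} {M : Type*} [AddCommGroup M] {w : Fin N → M}
  {I : Ideal (MvPolynomial (Fin N) ℂ)}

attribute [local instance] weightedGradedAlgebra

theorem IsMGraded.weightedHomogeneousComponent_mem (hI : IsMGraded w I)
    {f : MvPolynomial (Fin N) ℂ} (hf : f ∈ I) (n : M) :
    weightedHomogeneousComponent w n f ∈ I := by
  classical
  obtain ⟨S, hS, rfl⟩ := hI
  exact weightedHomogeneousComponent_mem_of_mem ℂ w (Ideal.homogeneous_span _ S hS) hf n

theorem IsMGraded.weightedHomogeneousComponent_mem_colon (hI : IsMGraded w I)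
    {g : MvPolynomial (Fin N) ℂ} {d : M} (hg : g.IsWeightedHomogeneous w d)
    {f : MvPolynomial (Fin N) ℂ} (hf : f ∈ I.colon (Ideal.span {g})) (n : M) :
    weightedHomogeneousComponent w n f ∈ I.colon (Ideal.span {g}) := by
  rw [Ideal.mem_colon_span_singleton] at hf ⊢
  rw [← weightedHomogeneousComponent_mul_of_isWeightedHomogeneous hg]
  exact hI.weightedHomogeneousComponent_mem hf _

end Graded

section Pairing

variable {N : ℕ}

theorem lam_apply_of_support_subset {p : MvPolynomial (Fin N) ℂ} {s : Finset (Fin N →₀ ℕ)}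
    (hs : p.support ⊆ s) (f : MvPolynomial (Fin N) ℂ) :
    lam p f = ∑ α ∈ s, coeff α p * coeff α f :=
  Finset.sum_subset hs fun α _ hα => by rw [notMem_support_iff.mp hα, zero_mul]

theorem lam_add_left (p p' f : MvPolynomial (Fin N) ℂ) :
    lam (p + p') f = lam p f + lam p' f := by
  classical
  rw [lam_apply_of_support_subset support_add,
    lam_apply_of_support_subset Finset.subset_union_left,
    lam_apply_of_support_subset Finset.subset_union_right, ← Finset.sum_add_distrib]
  simp only [coeff_add, add_mul]

theorem lam_smul_left (c : ℂ) (p f : MvPolynomial (Fin N) ℂ) :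
    lam (c • p) f = c * lam p f := by
  rw [lam_apply_of_support_subset support_smul, lam_apply_of_support_subset subset_rfl,
    Finset.mul_sum]
  simp only [coeff_smul, smul_eq_mul, mul_assoc]

theorem lam_monomial_one (p : MvPolynomial (Fin N) ℂ) (α : Fin N →₀ ℕ) :
    lam p (monomial α 1) = coeff α p := by
  classical
  rw [lam_apply_of_support_subset (Finset.subset_insert α p.support), Finset.sum_eq_single α]
  · simp
  · intro β _ hβ
    rw [coeff_monomial, if_neg (Ne.symm hβ), mul_zero]
  · simp

theorem lam_weightedHomogeneousComponent {M : Type*} [AddCommMonoid M] {w : Fin N → M}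
    {q : MvPolynomial (Fin N) ℂ} {m : M} (hq : q.IsWeightedHomogeneous w m)
    (f : MvPolynomial (Fin N) ℂ) :
    lam q (weightedHomogeneousComponent w m f) = lam q f := by
  classical
  refine Finset.sum_congr rfl fun α hα => ?_
  rw [coeff_weightedHomogeneousComponent, if_pos (hq (mem_support_iff.mp hα))]

noncomputable def lamBilin : MvPolynomial (Fin N) ℂ →ₗ[ℂ] MvPolynomial (Fin N) ℂ →ₗ[ℂ] ℂ :=
  LinearMap.mk₂ ℂ (fun p f => lam p f) lam_add_left lam_smul_left
    (fun p => map_add (lam p)) (fun c p => map_smul (lam p) c)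

end Pairing

section DualSpace

variable {N : ℕ} {M : Type*} [AddCommGroup M] (w : Fin N → M) (m : M)

/-- The space `D_0^m(K)` of the paper. -/
def dualSpace (K : Ideal (MvPolynomial (Fin N) ℂ)) : Submodule ℂ (MvPolynomial (Fin N) ℂ) where
  carrier := {p | p.IsWeightedHomogeneous w m ∧ ∀ f ∈ K, lam p f = 0}
  zero_mem' := ⟨isWeightedHomogeneous_zero ℂ w m, fun f _ => by simp [lam]⟩
  add_mem' := fun ⟨hp, hpK⟩ ⟨hq, hqK⟩ =>
    ⟨hp.add hq, fun f hf => by rw [lam_add_left, hpK f hf, hqK f hf, add_zero]⟩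
  smul_mem' := fun c _ ⟨hp, hpK⟩ =>
    ⟨(weightedHomogeneousSubmodule ℂ w m).smul_mem c hp,
      fun f hf => by rw [lam_smul_left, hpK f hf, mul_zero]⟩

noncomputable def lamDual :
    weightedHomogeneousSubmodule ℂ w m →ₗ[ℂ] Module.Dual ℂ (weightedHomogeneousSubmodule ℂ w m) :=
  lamBilin.compl₁₂ (weightedHomogeneousSubmodule ℂ w m).subtype
    (weightedHomogeneousSubmodule ℂ w m).subtype

theorem lamDual_injective : Function.Injective (lamDual w m) := by
  refine (injective_iff_map_eq_zero _).mpr fun p hp =>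
    Subtype.ext (MvPolynomial.ext _ _ fun α => ?_)
  by_contra hα
  have hmon : monomial α (1 : ℂ) ∈ weightedHomogeneousSubmodule ℂ w m :=
    isWeightedHomogeneous_monomial w α 1 (p.2 hα)
  have := LinearMap.congr_fun hp ⟨_, hmon⟩
  exact hα (by simpa [lamDual, lamBilin, lam_monomial_one] using this)

noncomputable def homogeneousSlice (K : Ideal (MvPolynomial (Fin N) ℂ)) :
    Submodule ℂ (weightedHomogeneousSubmodule ℂ w m) :=
  (K.restrictScalars ℂ).comap (weightedHomogeneousSubmodule ℂ w m).subtype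

variable {w m}

theorem dualSpace_eq_map {K : Ideal (MvPolynomial (Fin N) ℂ)}
    (hK : ∀ f ∈ K, weightedHomogeneousComponent w m f ∈ K) :
    dualSpace w m K = ((homogeneousSlice w m K).dualAnnihilator.comap (lamDual w m)).map
      (weightedHomogeneousSubmodule ℂ w m).subtype := by
  ext p
  constructor
  · rintro ⟨hp, hpK⟩
    exact ⟨⟨p, hp⟩, (Submodule.mem_dualAnnihilator _).mpr fun v hv => hpK v hv, rfl⟩
  · rintro ⟨p, hp, rfl⟩
    refine ⟨p.2, fun f hf => ?_⟩
    rw [Submodule.subtype_apply, ← lam_weightedHomogeneousComponent p.2]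
    exact (Submodule.mem_dualAnnihilator _).mp hp
      ⟨_, weightedHomogeneousComponent_mem w f m⟩ (hK f hf)

theorem dualSpace_iInf {ι : Type*} [Finite ι]
    (hfin : {α : Fin N →₀ ℕ | Finsupp.weight w α = m}.Finite)
    (K : ι → Ideal (MvPolynomial (Fin N) ℂ))
    (hK : ∀ i, ∀ f ∈ K i, weightedHomogeneousComponent w m f ∈ K i) :
    dualSpace w m (⨅ i, K i) = ⨆ i, dualSpace w m (K i) := by
  have := finiteDimensional_weightedHomogeneousSubmodule (K := ℂ) hfin
  have hslice : homogeneousSlice w m (⨅ i, K i) = ⨅ i, homogeneousSlice w m (K i) := by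
    ext; simp [homogeneousSlice]
  have hK_iInf : ∀ f ∈ ⨅ i, K i, weightedHomogeneousComponent w m f ∈ ⨅ i, K i :=
    fun f hf => Submodule.mem_iInf _ |>.mpr fun i => hK i f (Submodule.mem_iInf _ |>.mp hf i)
  rw [dualSpace_eq_map hK_iInf, hslice,
    Submodule.comap_dualAnnihilator_iInf (lamDual_injective w m), Submodule.map_iSup]
  exact iSup_congr fun i => (dualSpace_eq_map (hK i)).symm

end DualSpace

/-- **Eq. (4.1)**: for a pointed `M`-grading, an `M`-graded ideal `I`, and
`J = ⟨g₁,…,g_t⟩` with each `g_i` `M`-homogeneous, `D_0^m(I : J) = ∑_i D_0^m(I : g_i)`: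
an `M`-homogeneous `q` of degree `m` satisfies `λ_q(f) = 0` for all `f ∈ I : J` iff
`q = q₁ + ⋯ + q_t` where each `q_i` is `M`-homogeneous of degree `m` and `λ_{q_i}`
vanishes on `I : ⟨g_i⟩`. -/
theorem dualSpace_colon_ideal_sum {N t : ℕ} {M : Type*} [AddCommGroup M] (w : Fin N → M)
    (hpointed : ∀ m : M, {α : Fin N →₀ ℕ | Finsupp.weight w α = m}.Finite)
    (I : Ideal (MvPolynomial (Fin N) ℂ)) (hI : IsMGraded w I)
    (g : Fin t → MvPolynomial (Fin N) ℂ)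
    (hg : ∀ i, ∃ d : M, (g i).IsWeightedHomogeneous w d)
    (J : Ideal (MvPolynomial (Fin N) ℂ)) (hJ : J = Ideal.span (Set.range g))
    (m : M) (q : MvPolynomial (Fin N) ℂ) (hq : q.IsWeightedHomogeneous w m) :
    (∀ f ∈ I.colon J, lam q f = 0) ↔
      ∃ qs : Fin t → MvPolynomial (Fin N) ℂ, q = ∑ i, qs i ∧
        ∀ i, (qs i).IsWeightedHomogeneous w m ∧
          ∀ f ∈ I.colon (Ideal.span {g i}), lam (qs i) f = 0 := by
  have hcolon : I.colon J = ⨅ i, I.colon (Ideal.span {g i}) := by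
    simp only [hJ, Ideal.colon_span, ← Set.iUnion_singleton_eq_range, Submodule.colon_iUnion]
  have hsum := dualSpace_iInf (hpointed m) (fun i => I.colon (Ideal.span {g i})) fun i _ hf =>
    hI.weightedHomogeneousComponent_mem_colon (hg i).choose_spec hf m
  rw [hcolon]
  calc _ ↔ q ∈ dualSpace w m (⨅ i, I.colon (Ideal.span {g i})) := (and_iff_right hq).symm
    _ ↔ _ := by rw [hsum, Submodule.mem_iSup_iff_exists_sum]; rfl
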